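/- arXiv:1602.02132 — 3 statements merged into one kernel-verified Lean document; each statement's English description precedes it below -/
import Mathlib

section
/- Let X be a complex Banach space, let φ ∈ X, let r > 0 and let Ω_r(φ) be the open ball of radius r around φ in X. Suppose U and U_n (n ≥ 1) are continuous compact (possibly nonlinear) maps from Ω_r(φ) into X with U(φ) = φ, the sequence (U_n) is collectively compact (i.e., for every bounded subset B of Ω_r(φ) the set ⋃_{n≥1} U_n(B) has compact closure in X), U_n(x) → U(x) as n → ∞ for every x ∈ Ω_r(φ), and there exists r_φ ∈ (0, r] such that U and each U_n are twice Fréchet differentiable on the ball Ω_{r_φ}(φ) with a common bound M(φ,r) on the operator norms of all second derivatives U''(x) and U_n''(x) for x in that ball. If 1 is not an eigenvalue of the Fréchet derivative U'(φ), then φ is an isolated fixed point of U, and there exist ε ∈ (0, r_φ) and n_ε > 0 such that for all n ≥ n_ε the map U_n has a unique fixed point φ_n in the ball Ω_ε(φ); moreover there is a constant γ > 0 such that ‖φ − φ_n‖ ≤ γ ‖U(φ) − U_n(φ)‖ for all n ≥ n_ε. -/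
/-!
Linearize at `φ`. The difference quotients `t⁻¹ • (Uₙ (φ + t • v) - Uₙ φ)` approximate `Uₙ'(φ) v`
up to `M t ‖v‖²`, uniformly in `n`, so collective compactness and pointwise convergence of the
`Uₙ` pass to their derivatives: the `Uₙ'(φ)` are collectively compact and converge strongly to
`U'(φ)`. A subsequence argument turns "1 is not an eigenvalue of `U'(φ)`" into a bound
`c ‖v‖ ≤ ‖v - Uₙ'(φ) v‖` uniform in large `n`, and the Fredholm alternative makes each
`I - Uₙ'(φ)` invertible. On a ball of radius `ε` with `2 M ε < c`, the map `x ↦ x - Uₙ x` stays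
within `c / 2` of this linear map, which gives a zero near `φ` as soon as `Uₙ φ` is close to
`U φ = φ`, together with uniqueness and the error bound. The same estimate for `U` shows that `φ`
is an isolated fixed point.
-/

open Metric Filter Bornology Set Topology NNReal

/-- For linear maps, testing the unit ball is the same as testing every bounded set. -/
def CollectivelyCompact {ι 𝕜 E F : Type*} [NontriviallyNormedField 𝕜]
    [NormedAddCommGroup E] [NormedSpace 𝕜 E] [NormedAddCommGroup F] [NormedSpace 𝕜 F]
    (T : ι → E →L[𝕜] F) : Prop :=
  IsCompact (closure (⋃ i, T i '' closedBall 0 1))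

theorem totallyBounded_of_forall_subset_thickening {α : Type*} [PseudoMetricSpace α] {s : Set α}
    (h : ∀ δ > 0, ∃ K, IsCompact K ∧ s ⊆ thickening δ K) : TotallyBounded s := by
  refine totallyBounded_iff.2 fun ε hε => ?_
  obtain ⟨K, hK, hsK⟩ := h (ε / 2) (half_pos hε)
  obtain ⟨t, ht, hKt⟩ := totallyBounded_iff.1 hK.totallyBounded (ε / 2) (half_pos hε)
  refine ⟨t, ht, fun x hx => ?_⟩
  obtain ⟨z, hzK, hxz⟩ := mem_thickening_iff.1 (hsK hx)
  obtain ⟨y, hyt, hzy⟩ := mem_iUnion₂.1 (hKt hzK)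
  exact mem_iUnion₂.2 ⟨y, hyt, by rw [mem_ball] at hzy ⊢; linarith [dist_triangle x z y]⟩

section NontriviallyNormedField

variable {𝕜 E F : Type*} [NontriviallyNormedField 𝕜] [NormedAddCommGroup E] [NormedSpace 𝕜 E]
  [NormedAddCommGroup F] [NormedSpace 𝕜 F]

theorem CollectivelyCompact.isCompactOperator {ι : Type*} {T : ι → E →L[𝕜] F}
    (hT : CollectivelyCompact T) (i : ι) : IsCompactOperator (T i) :=
  (isCompactOperator_iff_isCompact_closure_image_closedBall (T i).toLinearMap one_pos).2 <|
    hT.of_isClosed_subset isClosed_closure (closure_mono (subset_iUnion_of_subset i subset_rfl))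

theorem IsCompactOperator.surjective_id_sub [CompleteSpace E] {T : E →L[𝕜] E}
    (hT : IsCompactOperator T) (hT1 : ∀ v, T v = v → v = 0) :
    Function.Surjective (ContinuousLinearMap.id 𝕜 E - T) := by
  have h1 : ¬ Module.End.HasEigenvalue (T : Module.End 𝕜 E) 1 := fun h => by
    obtain ⟨v, hv⟩ := h.exists_hasEigenvector
    exact hv.2 (hT1 v (by simpa using Module.End.mem_eigenspace_iff.1 hv.1))
  have h2 := (hT.hasEigenvalue_or_mem_resolventSet one_ne_zero).resolve_left h1
  rw [spectrum.mem_resolventSet_iff, ContinuousLinearMap.isUnit_iff_bijective] at h2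
  simpa using h2.2

theorem ApproximatesLinearOn.sub_mul_norm_sub_le {f : E → F} {L : E →L[𝕜] F} {s : Set E}
    {k : ℝ≥0} {c : ℝ} (hf : ApproximatesLinearOn f L s k) (hL : ∀ v, c * ‖v‖ ≤ ‖L v‖)
    {x y : E} (hx : x ∈ s) (hy : y ∈ s) : (c - k) * ‖x - y‖ ≤ ‖f x - f y‖ := by
  have h1 := hf x hx y hy
  have h2 := norm_sub_norm_le (L (x - y)) (f x - f y)
  rw [norm_sub_rev (L (x - y))] at h2
  linarith [hL (x - y)]

theorem ApproximatesLinearOn.injOn_of_mul_norm_le {f : E → F} {L : E →L[𝕜] F} {s : Set E}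
    {k : ℝ≥0} {c : ℝ} (hf : ApproximatesLinearOn f L s k) (hL : ∀ v, c * ‖v‖ ≤ ‖L v‖)
    (hkc : k < c) : InjOn f s := fun x hx y hy hxy => by
  have h := hf.sub_mul_norm_sub_le hL hx hy
  rw [hxy, sub_self, norm_zero] at h
  exact sub_eq_zero.1 (norm_le_zero_iff.1 (nonpos_of_mul_nonpos_right h (sub_pos.2 hkc)))

theorem ApproximatesLinearOn.exists_eq_zero_of_surjective [CompleteSpace E] {f : E → F}
    {L : E →L[𝕜] F} {a : E} {ε c : ℝ} {k : ℝ≥0}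
    (hf : ApproximatesLinearOn f L (closedBall a ε) k) (hL : Function.Surjective L) (hc : 0 < c)
    (hLc : ∀ v, c * ‖v‖ ≤ ‖L v‖) (hε : 0 ≤ ε) (ha : ‖f a‖ ≤ (c - k) * ε) :
    ∃ x ∈ closedBall a ε, f x = 0 := by
  have hinv : (c⁻¹.toNNReal : ℝ) = c⁻¹ := Real.coe_toNNReal _ (inv_nonneg.2 hc.le)
  let Linv : L.NonlinearRightInverse :=
    { toFun := fun y => (hL y).choose
      nnnorm := c⁻¹.toNNReal
      bound' := fun y => by
        have h := hLc (hL y).choose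
        rw [(hL y).choose_spec] at h
        rwa [hinv, ← div_eq_inv_mul, le_div_iff₀' hc]
      right_inv' := fun y => (hL y).choose_spec }
  refine hf.surjOn_closedBall_of_nonlinearRightInverse Linv hε subset_rfl ?_
  simpa [Linv, hinv, dist_eq_norm] using ha

end NontriviallyNormedField

section Real

variable {E F : Type*} [NormedAddCommGroup E] [NormedSpace ℝ E]
  [NormedAddCommGroup F] [NormedSpace ℝ F]

theorem IsCompactOperator.existsUnique_fixedPoint_of_approximatesLinearOn [CompleteSpace E]
    {f : E → E} {T : E →L[ℝ] E} {a : E} {ε c : ℝ} {k : ℝ≥0} (hT : IsCompactOperator T)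
    (hTc : ∀ v, c * ‖v‖ ≤ ‖v - T v‖) (hkc : k < c)
    (hf : ApproximatesLinearOn (fun x => x - f x) (ContinuousLinearMap.id ℝ E - T)
      (closedBall a ε) k)
    (ha : ‖a - f a‖ < (c - k) * ε) :
    (∃! x, x ∈ ball a ε ∧ f x = x) ∧
      ∀ x ∈ ball a ε, f x = x → (c - k) * ‖a - x‖ ≤ ‖a - f a‖ := by
  have hck : 0 < c - k := sub_pos.2 hkc
  have hc : 0 < c := k.coe_nonneg.trans_lt hkc
  have hL : ∀ v, c * ‖v‖ ≤ ‖(ContinuousLinearMap.id ℝ E - T) v‖ := hTc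
  have hT1 : ∀ v, T v = v → v = 0 := fun v hv => by
    have h := hTc v
    rw [hv, sub_self, norm_zero] at h
    exact norm_le_zero_iff.1 (nonpos_of_mul_nonpos_right h hc)
  set δ := ‖a - f a‖ / (c - k)
  have hδε : δ < ε := (div_lt_iff₀' hck).2 ha
  obtain ⟨x, hx, hfx⟩ :=
    (hf.mono_set (closedBall_subset_closedBall hδε.le)).exists_eq_zero_of_surjective
      (hT.surjective_id_sub hT1) hc hL (by positivity) (by rw [mul_div_cancel₀ _ hck.ne'])
  refine ⟨⟨x, ⟨closedBall_subset_ball hδε hx, (sub_eq_zero.1 hfx).symm⟩, ?_⟩, ?_⟩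
  · rintro y ⟨hy, hfy⟩
    refine hf.injOn_of_mul_norm_le hL hkc (ball_subset_closedBall hy)
      (closedBall_subset_closedBall hδε.le hx) ?_
    simp only [hfy, sub_self, hfx]
  · intro y hy hfy
    simpa [hfy] using hf.sub_mul_norm_sub_le hL (mem_closedBall_self ((by positivity : 0 ≤ δ).trans hδε.le))
      (ball_subset_closedBall hy)

theorem CollectivelyCompact.exists_norm_le {ι : Type*} {T : ι → E →L[ℝ] F}
    (hT : CollectivelyCompact T) : ∃ C, ∀ i, ‖T i‖ ≤ C := by
  obtain ⟨C, hC⟩ := isBounded_iff_forall_norm_le.1 (hT.isBounded.subset subset_closure)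
  refine ⟨max C 0, fun i => (T i).opNorm_le_of_unit_norm (le_max_right _ _) fun v hv => ?_⟩
  exact (hC _ (mem_iUnion.2 ⟨i, v, by simp [hv], rfl⟩)).trans (le_max_left _ _)

theorem tendsto_apply_of_tendsto_of_norm_le {ι : Type*} {l : Filter ι} {T : ι → E →L[ℝ] F}
    {A : E →L[ℝ] F} {C : ℝ} (hC : ∀ i, ‖T i‖ ≤ C)
    (hTA : ∀ v, Tendsto (fun i => T i v) l (𝓝 (A v))) {u : ι → E} {w : E}
    (hu : Tendsto u l (𝓝 w)) : Tendsto (fun i => T i (u i)) l (𝓝 (A w)) := by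
  have h : Tendsto (fun i => T i (u i - w)) l (𝓝 0) :=
    squeeze_zero_norm (fun i => (T i).le_of_opNorm_le (hC i) _)
      (by simpa using (hu.sub_const w).norm.const_mul C)
  simpa using (hTA w).add h

theorem ContinuousLinearMap.exists_norm_eq_one_norm_apply_lt (L : E →L[ℝ] F) {c : ℝ} {v : E}
    (h : ‖L v‖ < c * ‖v‖) : ∃ u, ‖u‖ = 1 ∧ ‖L u‖ < c := by
  have hv : v ≠ 0 := by rintro rfl; simp at h
  refine ⟨‖v‖⁻¹ • v, norm_smul_inv_norm hv, ?_⟩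
  rw [map_smul, norm_smul, norm_inv, norm_norm, inv_mul_lt_iff₀ (norm_pos_iff.2 hv), mul_comm]
  exact h

theorem CollectivelyCompact.exists_eventually_mul_norm_le_norm_sub {T : ℕ → E →L[ℝ] E}
    {A : E →L[ℝ] E} (hT : CollectivelyCompact T)
    (hTA : ∀ v, Tendsto (fun n => T n v) atTop (𝓝 (A v))) (hA : ∀ v, A v = v → v = 0) :
    ∃ c > 0, ∀ᶠ n in atTop, ∀ v, c * ‖v‖ ≤ ‖v - T n v‖ := by
  obtain ⟨C, hC⟩ := hT.exists_norm_le
  by_contra! hcon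
  have hseq : ∀ k : ℕ, ∃ n ≥ k, ∃ u, ‖u‖ = 1 ∧ ‖u - T n u‖ < 1 / (k + 1) := fun k => by
    obtain ⟨n, hkn, v, hv⟩ := frequently_atTop.1 (hcon (1 / (k + 1)) (by positivity)) k
    exact ⟨n, hkn, (ContinuousLinearMap.id ℝ E - T n).exists_norm_eq_one_norm_apply_lt hv⟩
  choose n hn u hu1 hu using hseq
  obtain ⟨w, -, σ, hσ, hw⟩ := hT.tendsto_subseq fun k =>
    subset_closure (mem_iUnion.2 ⟨n k, u k, by simp [hu1], rfl⟩)
  have hnσ : Tendsto (n ∘ σ) atTop atTop :=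
    tendsto_atTop_mono (fun j => hσ.le_apply.trans (hn _)) tendsto_id
  have hsmall : Tendsto (fun j => u (σ j) - T (n (σ j)) (u (σ j))) atTop (𝓝 0) :=
    squeeze_zero_norm (fun j => (hu (σ j)).le)
      (tendsto_one_div_add_atTop_nhds_zero_nat.comp hσ.tendsto_atTop)
  have huw : Tendsto (fun j => u (σ j)) atTop (𝓝 w) := by simpa using hsmall.add hw
  have hAw : A w = w := tendsto_nhds_unique
    (tendsto_apply_of_tendsto_of_norm_le (fun j => hC _) (fun v => (hTA v).comp hnσ) huw) hw
  have hw1 : ‖w‖ = 1 := tendsto_nhds_unique huw.norm (by simp [hu1])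
  simp [hA w hAw] at hw1

theorem Convex.approximatesLinearOn_id_sub {f : E → E} {f' : E → E →L[ℝ] E} {L : E →L[ℝ] E}
    {s : Set E} {k : ℝ≥0} (hs : Convex ℝ s) (hf : ∀ x ∈ s, HasFDerivAt f (f' x) x)
    (hk : ∀ x ∈ s, ‖f' x - L‖ ≤ k) :
    ApproximatesLinearOn (fun x => x - f x) (ContinuousLinearMap.id ℝ E - L) s k :=
  fun x hx y hy => by
    have h := hs.norm_image_sub_le_of_norm_hasFDerivWithin_le'
      (fun z hz => (hf z hz).hasFDerivWithinAt) hk hy hx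
    have heq : x - f x - (y - f y) - (ContinuousLinearMap.id ℝ E - L) (x - y) =
        -(f x - f y - L (x - y)) := by
      simp only [FunLike.coe_sub, ContinuousLinearMap.coe_id', Pi.sub_apply, id, map_sub]
      abel
    simpa only [heq, norm_neg] using h

theorem approximatesLinearOn_id_sub_of_norm_fderiv_sub_le {f : E → E} {f' : E → E →L[ℝ] E}
    {a : E} {R M ε : ℝ} {k : ℝ≥0} (hM : 0 ≤ M) (hf : ∀ x ∈ ball a R, HasFDerivAt f (f' x) x)
    (hf' : ∀ x ∈ ball a R, ‖f' x - f' a‖ ≤ M * ‖x - a‖) (hεR : ε < R) (hk : M * ε ≤ k) :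
    ApproximatesLinearOn (fun x => x - f x) (ContinuousLinearMap.id ℝ E - f' a)
      (closedBall a ε) k :=
  (convex_closedBall a ε).approximatesLinearOn_id_sub
    (fun x hx => hf x (closedBall_subset_ball hεR hx)) fun x hx =>
      (hf' x (closedBall_subset_ball hεR hx)).trans <|
        (mul_le_mul_of_nonneg_left (by rwa [← dist_eq_norm, ← mem_closedBall]) hM).trans hk

theorem norm_sub_sub_le_of_norm_fderiv_sub_le {f : E → F} {f' : E → E →L[ℝ] F} {a : E}
    {R M : ℝ} (hM : 0 ≤ M) (hf : ∀ x ∈ ball a R, HasFDerivAt f (f' x) x)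
    (hf' : ∀ x ∈ ball a R, ‖f' x - f' a‖ ≤ M * ‖x - a‖) {x : E} (hx : x ∈ ball a R) :
    ‖f x - f a - f' a (x - a)‖ ≤ M * ‖x - a‖ ^ 2 := by
  have hsub : closedBall a ‖x - a‖ ⊆ ball a R :=
    closedBall_subset_ball (by rwa [← dist_eq_norm, ← mem_ball])
  have h := (convex_closedBall a ‖x - a‖).norm_image_sub_le_of_norm_hasFDerivWithin_le'
    (fun z hz => (hf z (hsub hz)).hasFDerivWithinAt)
    (fun z hz => (hf' z (hsub hz)).trans (mul_le_mul_of_nonneg_left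
      (by rwa [← dist_eq_norm, ← mem_closedBall]) hM))
    (mem_closedBall_self (norm_nonneg _)) (by rw [mem_closedBall, dist_eq_norm])
  linarith

theorem norm_inv_smul_sub_sub_le {f : E → F} {L : E →L[ℝ] F} {a v : E} {t M : ℝ} (ht : 0 < t)
    (h : ‖f (a + t • v) - f a - L (t • v)‖ ≤ M * ‖t • v‖ ^ 2) :
    ‖t⁻¹ • (f (a + t • v) - f a) - L v‖ ≤ M * t * ‖v‖ ^ 2 := by
  have heq : t⁻¹ • (f (a + t • v) - f a) - L v = t⁻¹ • (f (a + t • v) - f a - L (t • v)) := by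
    simp only [map_smul, smul_sub, inv_smul_smul₀ ht.ne']
  rw [heq, norm_smul, norm_inv, Real.norm_of_nonneg ht.le, inv_mul_le_iff₀ ht]
  rw [norm_smul, Real.norm_of_nonneg ht.le] at h
  linarith

theorem tendsto_apply_of_norm_sub_sub_le {ι : Type*} {l : Filter ι} {G : ι → E → F}
    {L : ι → E →L[ℝ] F} {g : E → F} {L₀ : E →L[ℝ] F} {a : E} {R M : ℝ} (hR : 0 < R)
    (hG : ∀ i, ∀ x ∈ ball a R, ‖G i x - G i a - L i (x - a)‖ ≤ M * ‖x - a‖ ^ 2)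
    (hg : ∀ x ∈ ball a R, ‖g x - g a - L₀ (x - a)‖ ≤ M * ‖x - a‖ ^ 2)
    (hlim : ∀ x ∈ ball a R, Tendsto (fun i => G i x) l (𝓝 (g x))) (v : E) :
    Tendsto (fun i => L i v) l (𝓝 (L₀ v)) := by
  refine Metric.tendsto_nhds.2 fun ε hε => ?_
  have hline : Tendsto (fun t : ℝ => a + t • v) (𝓝 0) (𝓝 a) :=
    (by fun_prop : Continuous fun t : ℝ => a + t • v).tendsto' 0 a (by simp)
  have herr : Tendsto (fun t : ℝ => 2 * M * t * ‖v‖ ^ 2 + t) (𝓝 0) (𝓝 0) :=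
    (by fun_prop : Continuous fun t : ℝ => 2 * M * t * ‖v‖ ^ 2 + t).tendsto' 0 0 (by simp)
  obtain ⟨t, ht, hta, htε⟩ := ((hline.eventually (isOpen_ball.mem_nhds (mem_ball_self hR))).and
    (herr.eventually (gt_mem_nhds hε))).exists_gt
  set q : ι → F := fun i => t⁻¹ • (G i (a + t • v) - G i a)
  set q₀ : F := t⁻¹ • (g (a + t • v) - g a)
  have hq : Tendsto q l (𝓝 q₀) := ((hlim _ hta).sub (hlim a (mem_ball_self hR))).const_smul t⁻¹
  filter_upwards [Metric.tendsto_nhds.1 hq t ht] with i hi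
  have e1 := norm_inv_smul_sub_sub_le (L := L i) ht (by simpa using hG i _ hta)
  have e2 := norm_inv_smul_sub_sub_le (L := L₀) ht (by simpa using hg _ hta)
  have h3 := norm_sub_le_norm_sub_add_norm_sub (L i v) (q i) (L₀ v)
  have h4 := norm_sub_le_norm_sub_add_norm_sub (q i) q₀ (L₀ v)
  rw [norm_sub_rev (L i v) (q i)] at h3
  rw [dist_eq_norm] at hi ⊢
  linarith

theorem collectivelyCompact_of_norm_sub_sub_le [CompleteSpace F] {ι : Type*} {G : ι → E → F}
    {L : ι → E →L[ℝ] F} {K : Set F} {a : E} {R M : ℝ} (hK : IsCompact K) (hR : 0 < R)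
    (hM : 0 ≤ M) (hGK : ∀ i, ∀ x ∈ ball a R, G i x ∈ K)
    (hG : ∀ i, ∀ x ∈ ball a R, ‖G i x - G i a - L i (x - a)‖ ≤ M * ‖x - a‖ ^ 2) :
    CollectivelyCompact L := by
  refine (totallyBounded_of_forall_subset_thickening fun δ hδ => ?_).closure.isCompact_of_isClosed
    isClosed_closure
  have herr : Tendsto (fun t : ℝ => M * t) (𝓝 0) (𝓝 0) :=
    (by fun_prop : Continuous fun t : ℝ => M * t).tendsto' 0 0 (by simp)
  obtain ⟨t, ht, htR, htδ⟩ :=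
    ((eventually_lt_nhds hR).and (herr.eventually (gt_mem_nhds hδ))).exists_gt
  refine ⟨(fun p : F × F => t⁻¹ • (p.1 - p.2)) '' K ×ˢ K, (hK.prod hK).image (by fun_prop), ?_⟩
  rintro _ ⟨_, ⟨i, rfl⟩, v, hv, rfl⟩
  rw [mem_closedBall_zero_iff] at hv
  have hta : a + t • v ∈ ball a R := by
    rw [mem_ball, dist_eq_norm, add_sub_cancel_left, norm_smul, Real.norm_of_nonneg ht.le]
    nlinarith [norm_nonneg v]
  refine mem_thickening_iff.2 ⟨_, ⟨(G i (a + t • v), G i a),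
    ⟨hGK i _ hta, hGK i a (mem_ball_self hR)⟩, rfl⟩, ?_⟩
  rw [dist_eq_norm, norm_sub_rev]
  have e := norm_inv_smul_sub_sub_le (L := L i) ht (by simpa using hG i _ hta)
  have : M * t * ‖v‖ ^ 2 ≤ M * t :=
    mul_le_of_le_one_right (mul_nonneg hM ht.le) (pow_le_one₀ (norm_nonneg v) hv)
  linarith

theorem exists_eventually_mul_norm_le_norm_sub_fderiv [CompleteSpace E] {G : ℕ → E → E}
    {G' : ℕ → E → E →L[ℝ] E} {g : E → E} {g' : E → E →L[ℝ] E} {K : Set E} {a : E} {R M : ℝ}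
    (hR : 0 < R) (hM : 0 ≤ M) (hK : IsCompact K) (hGK : ∀ n, ∀ x ∈ ball a R, G n x ∈ K)
    (hG : ∀ n, ∀ x ∈ ball a R, HasFDerivAt (G n) (G' n x) x)
    (hG' : ∀ n, ∀ x ∈ ball a R, ‖G' n x - G' n a‖ ≤ M * ‖x - a‖)
    (hg : ∀ x ∈ ball a R, HasFDerivAt g (g' x) x)
    (hg' : ∀ x ∈ ball a R, ‖g' x - g' a‖ ≤ M * ‖x - a‖)
    (hlim : ∀ x ∈ ball a R, Tendsto (fun n => G n x) atTop (𝓝 (g x)))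
    (heig : ∀ v, g' a v = v → v = 0) :
    ∃ c > 0, (∀ v, c * ‖v‖ ≤ ‖v - g' a v‖) ∧
      ∀ᶠ n in atTop, IsCompactOperator (G' n a) ∧ ∀ v, c * ‖v‖ ≤ ‖v - G' n a v‖ := by
  have hGa : ∀ n, ∀ x ∈ ball a R, ‖G n x - G n a - G' n a (x - a)‖ ≤ M * ‖x - a‖ ^ 2 :=
    fun n _ hx => norm_sub_sub_le_of_norm_fderiv_sub_le hM (hG n) (hG' n) hx
  have hcc : CollectivelyCompact fun n => G' n a :=
    collectivelyCompact_of_norm_sub_sub_le hK hR hM hGK hGa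
  have hconv : ∀ v, Tendsto (fun n => G' n a v) atTop (𝓝 (g' a v)) :=
    tendsto_apply_of_norm_sub_sub_le hR hGa
      (fun _ hx => norm_sub_sub_le_of_norm_fderiv_sub_le hM hg hg' hx) hlim
  obtain ⟨c, hc, hcn⟩ := hcc.exists_eventually_mul_norm_le_norm_sub hconv heig
  exact ⟨c, hc, fun v => ge_of_tendsto (tendsto_const_nhds.sub (hconv v)).norm
    (hcn.mono fun n hn => hn v), hcn.mono fun n hn => ⟨hcc.isCompactOperator n, hn⟩⟩

theorem eq_of_isFixedPt_of_norm_fderiv_sub_le {f : E → E} {f' : E → E →L[ℝ] E} {a : E}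
    {R M ε c : ℝ} (hM : 0 ≤ M) (hf : ∀ x ∈ ball a R, HasFDerivAt f (f' x) x)
    (hf' : ∀ x ∈ ball a R, ‖f' x - f' a‖ ≤ M * ‖x - a‖) (hc : ∀ v, c * ‖v‖ ≤ ‖v - f' a v‖)
    (hε : 0 < ε) (hεR : ε < R) (hMε : 2 * M * ε < c) (hfa : f a = a) :
    ∀ x ∈ ball a ε, f x = x → x = a := by
  have hk : ((c / 2).toNNReal : ℝ) = c / 2 := Real.coe_toNNReal _ (by nlinarith)
  have hA := approximatesLinearOn_id_sub_of_norm_fderiv_sub_le (k := (c / 2).toNNReal) hM hf hf'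
    hεR (by rw [hk]; linarith)
  exact fun x hx hfx => hA.injOn_of_mul_norm_le hc (by rw [hk]; nlinarith)
    (ball_subset_closedBall hx) (mem_closedBall_self hε.le) (by simp [hfx, hfa])

theorem eventually_existsUnique_fixedPoint [CompleteSpace E] {ι : Type*} {l : Filter ι}
    {G : ι → E → E} {G' : ι → E → E →L[ℝ] E} {a : E} {R M ε c : ℝ} (hM : 0 ≤ M)
    (hG : ∀ i, ∀ x ∈ ball a R, HasFDerivAt (G i) (G' i x) x)
    (hG' : ∀ i, ∀ x ∈ ball a R, ‖G' i x - G' i a‖ ≤ M * ‖x - a‖)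
    (hc : ∀ᶠ i in l, IsCompactOperator (G' i a) ∧ ∀ v, c * ‖v‖ ≤ ‖v - G' i a v‖)
    (hGa : Tendsto (fun i => G i a) l (𝓝 a)) (hε : 0 < ε) (hεR : ε < R) (hMε : 2 * M * ε < c) :
    ∀ᶠ i in l, (∃! x, x ∈ ball a ε ∧ G i x = x) ∧
      ∀ x ∈ ball a ε, G i x = x → ‖a - x‖ ≤ 2 / c * ‖a - G i a‖ := by
  have hc0 : 0 < c := by nlinarith
  have hk : ((c / 2).toNNReal : ℝ) = c / 2 := Real.coe_toNNReal _ (by positivity)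
  filter_upwards [hc, hGa.eventually (ball_mem_nhds a (by positivity : 0 < c / 2 * ε))]
    with i ⟨hT, hTc⟩ hGia
  have hA := approximatesLinearOn_id_sub_of_norm_fderiv_sub_le (k := (c / 2).toNNReal) hM (hG i)
    (hG' i) hεR (by rw [hk]; linarith)
  obtain ⟨hex, hest⟩ := hT.existsUnique_fixedPoint_of_approximatesLinearOn hTc
    (by rw [hk]; linarith) hA (by rwa [hk, sub_half, ← dist_eq_norm, dist_comm])
  refine ⟨hex, fun x hx hfx => ?_⟩
  have h := hest x hx hfx
  rw [hk, sub_half] at h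
  rw [div_mul_eq_mul_div, le_div_iff₀ hc0]
  linarith

end Real

theorem atkinson_fixed_point_theorem_general
    (X : Type*) [NormedAddCommGroup X] [NormedSpace ℂ X] [CompleteSpace X]
    (φ : X) (r : ℝ)
    (U : X → X) (Un : ℕ → X → X)
    (hfix : U φ = φ)
    (hcc : ∀ B ⊆ ball φ r, IsBounded B →
      IsCompact (closure (⋃ n ∈ {m : ℕ | 1 ≤ m}, Un n '' B)))
    (hptw : ∀ x ∈ ball φ r, Tendsto (fun n : ℕ => Un n x) atTop (nhds (U x)))
    (rφ : ℝ) (hrφ : 0 < rφ) (hrφr : rφ ≤ r)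
    (U' : X → X →L[ℝ] X) (U'' : X → X →L[ℝ] X →L[ℝ] X)
    (Un' : ℕ → X → X →L[ℝ] X) (Un'' : ℕ → X → X →L[ℝ] X →L[ℝ] X)
    (hdU1 : ∀ x ∈ ball φ rφ, HasFDerivAt U (U' x) x)
    (hdU2 : ∀ x ∈ ball φ rφ, HasFDerivAt U' (U'' x) x)
    (hdUn1 : ∀ n : ℕ, 1 ≤ n → ∀ x ∈ ball φ rφ, HasFDerivAt (Un n) (Un' n x) x)
    (hdUn2 : ∀ n : ℕ, 1 ≤ n → ∀ x ∈ ball φ rφ, HasFDerivAt (Un' n) (Un'' n x) x)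
    (M : ℝ)
    (hM : ∀ x ∈ ball φ rφ, ‖U'' x‖ ≤ M ∧ ∀ n : ℕ, 1 ≤ n → ‖Un'' n x‖ ≤ M)
    (heig : ∀ v : X, U' φ v = v → v = 0) :
    (∃ δ > 0, ∀ x ∈ ball φ δ, U x = x → x = φ) ∧
    ∃ ε : ℝ, 0 < ε ∧ ε < rφ ∧ ∃ nε : ℕ, 0 < nε ∧
      (∀ n ≥ nε, ∃! φn : X, φn ∈ ball φ ε ∧ Un n φn = φn) ∧
      ∃ γ > 0, ∀ n ≥ nε, ∀ φn : X, φn ∈ ball φ ε ∧ Un n φn = φn →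
        ‖φ - φn‖ ≤ γ * ‖U φ - Un n φ‖ := by
  have hφ : φ ∈ ball φ rφ := mem_ball_self hrφ
  have hM0 : 0 ≤ M := (norm_nonneg (U'' φ)).trans (hM φ hφ).1
  have hLU : ∀ x ∈ ball φ rφ, ‖U' x - U' φ‖ ≤ M * ‖x - φ‖ := fun x hx =>
    (convex_ball φ rφ).norm_image_sub_le_of_norm_hasFDerivWithin_le
      (fun y hy => (hdU2 y hy).hasFDerivWithinAt) (fun y hy => (hM y hy).1) hφ hx
  have hLUn : ∀ n : ℕ, ∀ x ∈ ball φ rφ, ‖Un' (n + 1) x - Un' (n + 1) φ‖ ≤ M * ‖x - φ‖ :=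
    fun n x hx => (convex_ball φ rφ).norm_image_sub_le_of_norm_hasFDerivWithin_le
      (fun y hy => (hdUn2 (n + 1) n.succ_pos y hy).hasFDerivWithinAt)
      (fun y hy => (hM y hy).2 (n + 1) n.succ_pos) hφ hx
  have hlim : ∀ x ∈ ball φ rφ, Tendsto (fun n => Un (n + 1) x) atTop (𝓝 (U x)) := fun x hx =>
    (hptw x (ball_subset_ball hrφr hx)).comp (tendsto_add_atTop_nat 1)
  obtain ⟨c, hc, hcU, hcn⟩ := exists_eventually_mul_norm_le_norm_sub_fderiv hrφ hM0
    (hcc _ (ball_subset_ball hrφr) isBounded_ball)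
    (fun n x hx => subset_closure (mem_biUnion n.succ_pos (mem_image_of_mem _ hx)))
    (fun n => hdUn1 (n + 1) n.succ_pos) hLUn hdU1 hLU hlim heig
  obtain ⟨ε, hε, hεr, hMε⟩ : ∃ ε > 0, ε < rφ ∧ 2 * M * ε < c :=
    ((eventually_lt_nhds hrφ).and (((by fun_prop : Continuous fun t : ℝ => 2 * M * t).tendsto' 0 0
      (by simp)).eventually (gt_mem_nhds hc))).exists_gt
  obtain ⟨N, hN⟩ := eventually_atTop.1 (eventually_existsUnique_fixedPoint hM0
    (fun n => hdUn1 (n + 1) n.succ_pos) hLUn hcn (by simpa [hfix] using hlim φ hφ) hε hεr hMε)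
  have hUn : ∀ n ≥ N + 1, (∃! x, x ∈ ball φ ε ∧ Un n x = x) ∧
      ∀ x ∈ ball φ ε, Un n x = x → ‖φ - x‖ ≤ 2 / c * ‖U φ - Un n φ‖ := by
    intro n hn
    obtain ⟨m, rfl⟩ : ∃ m, n = m + 1 := ⟨n - 1, by omega⟩
    rw [hfix]
    exact hN m (by omega)
  exact ⟨⟨ε, hε, eq_of_isFixedPt_of_norm_fderiv_sub_le hM0 hdU1 hLU hcU hε hεr hMε hfix⟩,
    ε, hε, hεr, N + 1, N.succ_pos, fun n hn => (hUn n hn).1, 2 / c, by positivity,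
    fun n hn x ⟨hx, hfx⟩ => (hUn n hn).2 x hx hfx⟩

/-- **Atkinson's theorem** (Theorem 4 in Atkinson, recalled as Theorem 2.1):
Let `X` be a complex Banach space, `φ ∈ X`, `r > 0`, and let `Ω_r(φ)` be the open
ball of radius `r` around `φ`.  Suppose `U` and the `U n` (`n ≥ 1`) are continuous compact maps
from `Ω_r(φ)` into `X` with `U φ = φ`, the sequence `(U n)` is collectively compact,
`U n x → U x` for every `x ∈ Ω_r(φ)`, and on some smaller ball `Ω_{r_φ}(φ)` (`0 < r_φ ≤ r`)
all the maps are twice Fréchet differentiable with a common bound `M` on the second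
derivatives.  If `1` is not an eigenvalue of `U'(φ)`, then `φ` is an isolated fixed point of `U`,
and there are `ε ∈ (0, r_φ)` and `n_ε > 0` such that for `n ≥ n_ε` the map `U n` has a unique
fixed point `φ_n` in `Ω_ε(φ)`, with `‖φ - φ_n‖ ≤ γ * ‖U φ - U n φ‖` for some constant `γ > 0`. -/
theorem atkinson_fixed_point_theorem
    (X : Type*) [NormedAddCommGroup X] [NormedSpace ℂ X] [CompleteSpace X]
    (φ : X) (r : ℝ) (hr : 0 < r)
    (U : X → X) (Un : ℕ → X → X)
    (hfix : U φ = φ)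
    (hUcont : ContinuousOn U (ball φ r))
    (hUcomp : ∀ B ⊆ ball φ r, IsBounded B → IsCompact (closure (U '' B)))
    (hUncont : ∀ n : ℕ, 1 ≤ n → ContinuousOn (Un n) (ball φ r))
    (hUncomp : ∀ n : ℕ, 1 ≤ n → ∀ B ⊆ ball φ r, IsBounded B →
      IsCompact (closure (Un n '' B)))
    (hcc : ∀ B ⊆ ball φ r, IsBounded B →
      IsCompact (closure (⋃ n ∈ {m : ℕ | 1 ≤ m}, Un n '' B)))
    (hptw : ∀ x ∈ ball φ r, Tendsto (fun n : ℕ => Un n x) atTop (nhds (U x)))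
    (rφ : ℝ) (hrφ : 0 < rφ) (hrφr : rφ ≤ r)
    (U' : X → X →L[ℝ] X) (U'' : X → X →L[ℝ] X →L[ℝ] X)
    (Un' : ℕ → X → X →L[ℝ] X) (Un'' : ℕ → X → X →L[ℝ] X →L[ℝ] X)
    (hdU1 : ∀ x ∈ ball φ rφ, HasFDerivAt U (U' x) x)
    (hdU2 : ∀ x ∈ ball φ rφ, HasFDerivAt U' (U'' x) x)
    (hdUn1 : ∀ n : ℕ, 1 ≤ n → ∀ x ∈ ball φ rφ, HasFDerivAt (Un n) (Un' n x) x)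
    (hdUn2 : ∀ n : ℕ, 1 ≤ n → ∀ x ∈ ball φ rφ, HasFDerivAt (Un' n) (Un'' n x) x)
    (M : ℝ)
    (hM : ∀ x ∈ ball φ rφ, ‖U'' x‖ ≤ M ∧ ∀ n : ℕ, 1 ≤ n → ‖Un'' n x‖ ≤ M)
    (heig : ∀ v : X, U' φ v = v → v = 0) :
    (∃ δ > 0, ∀ x ∈ ball φ δ, U x = x → x = φ) ∧
    ∃ ε : ℝ, 0 < ε ∧ ε < rφ ∧ ∃ nε : ℕ, 0 < nε ∧
      (∀ n ≥ nε, ∃! φn : X, φn ∈ ball φ ε ∧ Un n φn = φn) ∧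
      ∃ γ > 0, ∀ n ≥ nε, ∀ φn : X, φn ∈ ball φ ε ∧ Un n φn = φn →
        ‖φ - φn‖ ≤ γ * ‖U φ - Un n φ‖ :=
  atkinson_fixed_point_theorem_general X φ r U Un hfix hcc hptw rφ hrφ hrφr U' U'' Un' Un'' hdU1
    hdU2 hdUn1 hdUn2 M hM heig
end

section
/- Kolmogorov–Riesz–Fréchet theorem: let 1 ≤ p < ∞ and let F be a bounded subset of L^p(ℝ^q, ℂ). For h ∈ ℝ^q let τ_h f := f(· + h). If ‖τ_h f − f‖_{L^p} → 0 as ‖h‖ → 0 uniformly in f ∈ F, then for every measurable set Ω ⊆ ℝ^q of finite measure, the set of restrictions { f|_Ω : f ∈ F } has compact closure in L^p(Ω, ℂ). -/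
/-!
Replace `f` by `gridAverage r f`, whose value at `x` is the average of `f` over the cube of the
grid of mesh `r` containing `x`. Jensen's inequality and Fubini give
`‖gridAverage r f - f‖_p ≤ 2^q sup_{‖h‖<r} ‖τ_h f - f‖_p`, which is small uniformly on `F` once
`r` is small, while the cube averages are bounded by `r^(-q/p) sup_F ‖f‖_p`. Since `Ω` has finite
measure, only a small part of it lies outside finitely many cubes, so on `Ω` every `f ∈ F` is close
to a bounded step function on those cubes. These step functions form a continuous image of a
compact ball of a finite-dimensional space, so the restrictions to `Ω` are totally bounded in the
complete space `L^p(Ω)`.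
-/

open MeasureTheory Set Filter
open scoped ENNReal Topology
noncomputable section

theorem totallyBounded_of_forall_exists_dist_lt {X : Type*} [PseudoMetricSpace X] {s : Set X}
    (h : ∀ ε > 0, ∃ t, TotallyBounded t ∧ ∀ x ∈ s, ∃ y ∈ t, dist x y < ε) : TotallyBounded s := by
  refine Metric.totallyBounded_iff.2 fun ε hε => ?_
  obtain ⟨t, ht, hst⟩ := h (ε / 2) (half_pos hε)
  obtain ⟨N, hN, htN⟩ := Metric.totallyBounded_iff.1 ht (ε / 2) (half_pos hε)
  refine ⟨N, hN, fun x hx => ?_⟩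
  obtain ⟨y, hy, hxy⟩ := hst x hx
  obtain ⟨z, hz, hyz⟩ := mem_iUnion₂.1 (htN hy)
  rw [Metric.mem_ball] at hyz
  exact mem_iUnion₂.2 ⟨z, hz, Metric.mem_ball.2 (by linarith [dist_triangle x y z])⟩

section Average

variable {α E : Type*} [MeasurableSpace α] {μ : Measure α} {s : Set α}
  [NormedAddCommGroup E] [NormedSpace ℝ E] {p : ℝ≥0∞}

theorem enorm_setAverage_le_eLpNorm (hp : 1 ≤ p) (hs₀ : μ s ≠ 0) (hs : μ s ≠ ∞) {g : α → E}
    (hg : AEStronglyMeasurable g (μ.restrict s)) :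
    ‖⨍ x in s, g x ∂μ‖ₑ ≤ μ s ^ (-p.toReal⁻¹) * eLpNorm g p (μ.restrict s) := by
  have hHolder := eLpNorm_le_eLpNorm_mul_rpow_measure_univ hp hg
  simp only [eLpNorm_one_eq_lintegral_enorm, Measure.restrict_apply_univ, ENNReal.toReal_one,
    one_div, inv_one] at hHolder
  calc ‖⨍ x in s, g x ∂μ‖ₑ ≤ (μ s)⁻¹ * ∫⁻ x in s, ‖g x‖ₑ ∂μ := by
        rw [setAverage_eq, enorm_smul, measureReal_def, ← ENNReal.toReal_inv,
          Real.enorm_eq_ofReal (by positivity), ENNReal.ofReal_toReal (ENNReal.inv_ne_top.2 hs₀)]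
        gcongr
        exact enorm_integral_le_lintegral_enorm _
    _ ≤ (μ s)⁻¹ * (eLpNorm g p (μ.restrict s) * μ s ^ (1 - p.toReal⁻¹)) := by gcongr
    _ = μ s ^ (-p.toReal⁻¹) * eLpNorm g p (μ.restrict s) := by
        rw [mul_left_comm, ← ENNReal.rpow_neg_one, ← ENNReal.rpow_add _ _ hs₀ hs, mul_comm]
        congr 2
        ring

theorem enorm_setAverage_rpow_le (hp : 1 ≤ p) (hp_top : p ≠ ∞) (hs₀ : μ s ≠ 0) (hs : μ s ≠ ∞)
    {g : α → E} (hg : AEStronglyMeasurable g (μ.restrict s)) :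
    ‖⨍ x in s, g x ∂μ‖ₑ ^ p.toReal ≤ (μ s)⁻¹ * ∫⁻ x in s, ‖g x‖ₑ ^ p.toReal ∂μ := by
  have hp₀ : p ≠ 0 := (zero_lt_one.trans_le hp).ne'
  have ht : 0 < p.toReal := ENNReal.toReal_pos hp₀ hp_top
  calc ‖⨍ x in s, g x ∂μ‖ₑ ^ p.toReal
      ≤ (μ s ^ (-p.toReal⁻¹) * eLpNorm g p (μ.restrict s)) ^ p.toReal := by
        gcongr; exact enorm_setAverage_le_eLpNorm hp hs₀ hs hg
    _ = (μ s)⁻¹ * ∫⁻ x in s, ‖g x‖ₑ ^ p.toReal ∂μ := by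
        rw [ENNReal.mul_rpow_of_nonneg _ _ ht.le, ← ENNReal.rpow_mul, neg_mul,
          inv_mul_cancel₀ ht.ne', ENNReal.rpow_neg_one, eLpNorm_eq_eLpNorm' hp₀ hp_top,
          ← lintegral_rpow_enorm_eq_rpow_eLpNorm' ht]

end Average

theorem setLIntegral_ball_eq_setLIntegral_ball_zero {G : Type*} [NormedAddCommGroup G]
    [MeasurableSpace G] [MeasurableAdd G] (μ : Measure G) [μ.IsAddLeftInvariant]
    (φ : G → ℝ≥0∞) (x : G) (r : ℝ) :
    ∫⁻ y in Metric.ball x r, φ y ∂μ = ∫⁻ h in Metric.ball 0 r, φ (x + h) ∂μ := by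
  rw [← (measurePreserving_add_left μ x).setLIntegral_comp_preimage_emb
    (measurableEmbedding_addLeft x), Metric.preimage_add_left_ball, neg_add_cancel]

theorem MeasureTheory.AEStronglyMeasurable.comp_add_sub_comp_fst {G E : Type*} [AddCommGroup G]
    [MeasurableSpace G] [MeasurableAdd₂ G] {μ : Measure G} [SFinite μ] [μ.IsAddLeftInvariant]
    (ν : Measure G) [SFinite ν] [NormedAddCommGroup E] {f : G → E}
    (hf : AEStronglyMeasurable f μ) :
    AEStronglyMeasurable (fun z : G × G => f (z.1 + z.2) - f z.1) (μ.prod ν) := by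
  refine (hf.comp_quasiMeasurePreserving ?_).sub hf.comp_fst
  simpa only [add_comm] using quasiMeasurePreserving_add_swap μ ν

section Grid

variable {ι : Type*}

def gridCube (r : ℝ) (k : ι → ℤ) : Set (ι → ℝ) :=
  univ.pi fun i => Ico (r * k i) (r * k i + r)

def gridIndex (r : ℝ) (x : ι → ℝ) : ι → ℤ := fun i => ⌊x i / r⌋

theorem measurable_gridIndex (r : ℝ) : Measurable (gridIndex (ι := ι) r) :=
  measurable_pi_lambda _ fun i => by unfold gridIndex; fun_prop

theorem volume_gridCube [Fintype ι] (r : ℝ) (k : ι → ℤ) :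
    volume (gridCube r k) = ENNReal.ofReal r ^ Fintype.card ι := by
  simp [gridCube, volume_pi_pi, Real.volume_Ico]

theorem mem_gridCube_gridIndex {r : ℝ} (hr : 0 < r) (x : ι → ℝ) :
    x ∈ gridCube r (gridIndex r x) := by
  intro i _
  have h₁ := Int.floor_le (x i / r)
  have h₂ := Int.lt_floor_add_one (x i / r)
  rw [le_div_iff₀ hr] at h₁
  rw [div_lt_iff₀ hr] at h₂
  constructor <;> simp only [gridIndex] <;> linarith

theorem gridCube_subset_ball [Fintype ι] {r : ℝ} (hr : 0 < r) {k : ι → ℤ} {x : ι → ℝ}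
    (hx : x ∈ gridCube r k) : gridCube r k ⊆ Metric.ball x r := by
  intro y hy
  rw [Metric.mem_ball, dist_pi_lt_iff hr]
  intro i
  have hxi := hx i (mem_univ i)
  have hyi := hy i (mem_univ i)
  simp only [mem_Ico] at hxi hyi
  rw [Real.dist_eq, abs_lt]
  constructor <;> linarith

end Grid

section GridAverage

variable {ι E : Type*} [Fintype ι] [NormedAddCommGroup E] [NormedSpace ℝ E] {p : ℝ≥0∞}
  {r : ℝ} {f : (ι → ℝ) → E}

def gridAverage (r : ℝ) (f : (ι → ℝ) → E) (x : ι → ℝ) : E :=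
  ⨍ y in gridCube r (gridIndex r x), f y

theorem enorm_gridAverage_sub_rpow_le [CompleteSpace E] (hp : 1 ≤ p) (hp_top : p ≠ ∞)
    (hr : 0 < r) (hf : LocallyIntegrable f) (x : ι → ℝ) :
    ‖gridAverage r f x - f x‖ₑ ^ p.toReal ≤
      (ENNReal.ofReal r ^ Fintype.card ι)⁻¹ *
        ∫⁻ h in Metric.ball 0 r, ‖f (x + h) - f x‖ₑ ^ p.toReal := by
  set Q := gridCube r (gridIndex r x)
  have hQ : volume Q = ENNReal.ofReal r ^ Fintype.card ι := volume_gridCube r _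
  have hQ₀ : volume Q ≠ 0 := by simp [hQ, hr]
  have hQ_top : volume Q ≠ ∞ := by simp [hQ]
  have hQ_ball : Q ⊆ Metric.ball x r := gridCube_subset_ball hr (mem_gridCube_gridIndex hr x)
  have hfQ : IntegrableOn f Q := (hf.integrableOn_isCompact (isCompact_closedBall x r)).mono_set
    (hQ_ball.trans Metric.ball_subset_closedBall)
  have hsub : gridAverage r f x - f x = ⨍ y in Q, (f y - f x) := by
    rw [setAverage_eq, integral_sub hfQ (integrableOn_const hQ_top), setIntegral_const,
      smul_sub, ← setAverage_eq, measureReal_def,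
      inv_smul_smul₀ (ENNReal.toReal_ne_zero.2 ⟨hQ₀, hQ_top⟩)]
    rfl
  calc ‖gridAverage r f x - f x‖ₑ ^ p.toReal
      ≤ (volume Q)⁻¹ * ∫⁻ y in Q, ‖f y - f x‖ₑ ^ p.toReal := by
        rw [hsub]
        exact enorm_setAverage_rpow_le hp hp_top hQ₀ hQ_top
          (hfQ.aestronglyMeasurable.sub aestronglyMeasurable_const)
    _ ≤ (volume Q)⁻¹ * ∫⁻ y in Metric.ball x r, ‖f y - f x‖ₑ ^ p.toReal := by
        gcongr
    _ = _ := by rw [hQ, setLIntegral_ball_eq_setLIntegral_ball_zero]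

theorem lintegral_enorm_gridAverage_sub_rpow_le [CompleteSpace E] (hp : 1 ≤ p)
    (hp_top : p ≠ ∞) (hr : 0 < r) (hf : MemLp f p volume) {ε : ℝ≥0∞}
    (hε : ∀ h : ι → ℝ, ‖h‖ < r → eLpNorm (fun x => f (x + h) - f x) p volume ≤ ε) :
    ∫⁻ x, ‖gridAverage r f x - f x‖ₑ ^ p.toReal ≤ 2 ^ Fintype.card ι * ε ^ p.toReal := by
  have hp₀ : p ≠ 0 := (zero_lt_one.trans_le hp).ne'
  have ht : 0 < p.toReal := ENNReal.toReal_pos hp₀ hp_top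
  set R := ENNReal.ofReal r ^ Fintype.card ι
  have hR₀ : R ≠ 0 := by simp [R, hr]
  have hR_top : R ≠ ∞ := by simp [R]
  have hmeas : AEMeasurable (Function.uncurry fun x h => ‖f (x + h) - f x‖ₑ ^ p.toReal)
      (volume.prod (volume.restrict (Metric.ball (0 : ι → ℝ) r))) :=
    ((hf.1.comp_add_sub_comp_fst _).enorm.pow_const _)
  have htranslate : ∀ h ∈ Metric.ball (0 : ι → ℝ) r,
      ∫⁻ x, ‖f (x + h) - f x‖ₑ ^ p.toReal ≤ ε ^ p.toReal := fun h hh => by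
    rw [lintegral_rpow_enorm_eq_rpow_eLpNorm' ht, ← eLpNorm_eq_eLpNorm' hp₀ hp_top]
    gcongr
    exact hε h (mem_ball_zero_iff.1 hh)
  calc ∫⁻ x, ‖gridAverage r f x - f x‖ₑ ^ p.toReal
      ≤ ∫⁻ x, R⁻¹ * ∫⁻ h in Metric.ball 0 r, ‖f (x + h) - f x‖ₑ ^ p.toReal :=
        lintegral_mono fun x =>
          enorm_gridAverage_sub_rpow_le hp hp_top hr (hf.locallyIntegrable hp) x
    _ = R⁻¹ * ∫⁻ h in Metric.ball 0 r, ∫⁻ x, ‖f (x + h) - f x‖ₑ ^ p.toReal := by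
        rw [lintegral_const_mul' _ _ (ENNReal.inv_ne_top.2 hR₀), lintegral_lintegral_swap hmeas]
    _ ≤ R⁻¹ * ∫⁻ _ in Metric.ball (0 : ι → ℝ) r, ε ^ p.toReal := by
        gcongr R⁻¹ * ?_
        exact setLIntegral_mono' measurableSet_ball htranslate
    _ = 2 ^ Fintype.card ι * ε ^ p.toReal := by
        rw [setLIntegral_const, Real.volume_pi_ball _ hr, mul_pow,
          ENNReal.ofReal_mul (by positivity), ENNReal.ofReal_pow hr.le,
          ENNReal.ofReal_pow zero_le_two, ENNReal.ofReal_ofNat]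
        calc R⁻¹ * (ε ^ p.toReal * (2 ^ Fintype.card ι * R))
            = 2 ^ Fintype.card ι * ε ^ p.toReal * (R⁻¹ * R) := by ring
          _ = 2 ^ Fintype.card ι * ε ^ p.toReal := by
            rw [ENNReal.inv_mul_cancel hR₀ hR_top, mul_one]

theorem eLpNorm_gridAverage_sub_le [CompleteSpace E] (hp : 1 ≤ p) (hp_top : p ≠ ∞)
    (hr : 0 < r) (hf : MemLp f p volume) {ε : ℝ≥0∞}
    (hε : ∀ h : ι → ℝ, ‖h‖ < r → eLpNorm (fun x => f (x + h) - f x) p volume ≤ ε) :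
    eLpNorm (gridAverage r f - f) p volume ≤ 2 ^ Fintype.card ι * ε := by
  have hp₀ : p ≠ 0 := (zero_lt_one.trans_le hp).ne'
  have ht : 0 < p.toReal := ENNReal.toReal_pos hp₀ hp_top
  have ht₁ : p.toReal⁻¹ ≤ 1 :=
    inv_le_one_of_one_le₀ (ENNReal.toReal_mono hp_top hp |>.trans' (by simp))
  rw [eLpNorm_eq_lintegral_rpow_enorm_toReal hp₀ hp_top, one_div]
  calc (∫⁻ x, ‖(gridAverage r f - f) x‖ₑ ^ p.toReal) ^ p.toReal⁻¹
      ≤ (2 ^ Fintype.card ι * ε ^ p.toReal) ^ p.toReal⁻¹ := by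
        gcongr
        exact lintegral_enorm_gridAverage_sub_rpow_le hp hp_top hr hf hε
    _ = (2 ^ Fintype.card ι) ^ p.toReal⁻¹ * ε := by
        rw [ENNReal.mul_rpow_of_nonneg _ _ (by positivity), ← ENNReal.rpow_mul,
          mul_inv_cancel₀ ht.ne', ENNReal.rpow_one]
    _ ≤ 2 ^ Fintype.card ι * ε := by
        gcongr
        conv_rhs => rw [← ENNReal.rpow_one (2 ^ Fintype.card ι)]
        exact ENNReal.rpow_le_rpow_of_exponent_le (one_le_pow₀ one_le_two) ht₁

theorem exists_norm_setAverage_gridCube_le (hp : 1 ≤ p) (hr : 0 < r) {F : Set ((ι → ℝ) → E)}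
    (hF : ∀ f ∈ F, AEStronglyMeasurable f volume) {M : ℝ≥0∞} (hM_top : M ≠ ∞)
    (hM : ∀ f ∈ F, eLpNorm f p volume ≤ M) :
    ∃ B : ℝ, ∀ f ∈ F, ∀ k, ‖⨍ y in gridCube r k, f y‖ ≤ B := by
  have hQ₀ : ENNReal.ofReal r ^ Fintype.card ι ≠ 0 := by simp [hr]
  refine ⟨((ENNReal.ofReal r ^ Fintype.card ι) ^ (-p.toReal⁻¹) * M).toReal, fun f hf k => ?_⟩
  rw [← toReal_enorm]
  refine ENNReal.toReal_mono (ENNReal.mul_ne_top (by simp [hQ₀]) hM_top) ?_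
  rw [← volume_gridCube r k]
  calc ‖⨍ y in gridCube r k, f y‖ₑ
      ≤ volume (gridCube r k) ^ (-p.toReal⁻¹) * eLpNorm f p (volume.restrict (gridCube r k)) :=
        enorm_setAverage_le_eLpNorm hp (by rwa [volume_gridCube]) (by simp [volume_gridCube])
          (hF f hf).restrict
    _ ≤ volume (gridCube r k) ^ (-p.toReal⁻¹) * M := by
        gcongr
        exact (eLpNorm_mono_measure f Measure.restrict_le_self).trans (hM f hf)

end GridAverage

section StepFunctions

variable {α β E : Type*} [MeasurableSpace α] [MeasurableSpace β] [NormedAddCommGroup E]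

def boundedStepFunctions (p : ℝ≥0∞) (μ : Measure α) (π : α → β) (S : Finset β) (B : ℝ) :
    Set (Lp E p μ) :=
  {u | ∃ c : β → E, (∀ b, ‖c b‖ ≤ B) ∧ (∀ b ∉ S, c b = 0) ∧ u =ᵐ[μ] c ∘ π}

variable {p : ℝ≥0∞} {μ : Measure α} [IsFiniteMeasure μ] [Countable β]
  [MeasurableSingletonClass β] {π : α → β}

theorem totallyBounded_boundedStepFunctions [NormedSpace ℝ E] [FiniteDimensional ℝ E]
    [Fact (1 ≤ p)] (hπ : Measurable π) (S : Finset β) (B : ℝ) :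
    TotallyBounded (boundedStepFunctions (E := E) p μ π S B) := by
  classical
  let extend (c : S → E) (b : β) : E := if h : b ∈ S then c ⟨b, h⟩ else 0
  have hmem (c : S → E) : MemLp (extend c ∘ π) p μ := by
    refine .of_bound (StronglyMeasurable.of_discrete.comp_measurable hπ).aestronglyMeasurable ‖c‖
      (ae_of_all _ fun x => ?_)
    simp only [Function.comp_apply, extend]
    split_ifs
    · exact norm_le_pi_norm c _
    · simp
  let T : (S → E) →ₗ[ℝ] Lp E p μ :=
    { toFun := fun c => (hmem c).toLp
      map_add' := fun c c' => by
        rw [← MemLp.toLp_add]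
        congr 1
        ext x
        simp only [Function.comp_apply, Pi.add_apply, extend]
        split_ifs <;> simp
      map_smul' := fun a c => by
        rw [RingHom.id_apply, ← MemLp.toLp_const_smul]
        congr 1
        ext x
        simp only [Function.comp_apply, Pi.smul_apply, extend]
        split_ifs <;> simp }
  have hT (c : S → E) : T c =ᵐ[μ] extend c ∘ π := MemLp.coeFn_toLp (hmem c)
  have hK : IsCompact (T '' univ.pi fun _ => Metric.closedBall (0 : E) B) :=
    (isCompact_univ_pi fun _ => isCompact_closedBall (0 : E) B).image
      T.continuous_of_finiteDimensional
  refine hK.totallyBounded.subset ?_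
  rintro u ⟨c, hcB, hcS, hu⟩
  refine ⟨fun b => c b, fun b _ => mem_closedBall_zero_iff.2 (hcB b), ?_⟩
  have hc : extend (fun b => c b) = c := by
    ext b
    by_cases hb : b ∈ S <;> simp [extend, hb, hcS]
  refine Lp.ext ((hT _).trans ?_)
  rw [hc]
  exact hu.symm

theorem exists_mem_boundedStepFunctions_edist_le [Fact (1 ≤ p)] (hπ : Measurable π)
    {g : Lp E p μ} {f : α → E} (hgf : g =ᵐ[μ] f) {B : ℝ} {c : β → E} (hc : ∀ b, ‖c b‖ ≤ B)
    (S : Finset β) :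
    ∃ u ∈ boundedStepFunctions p μ π S B, edist g u ≤
      eLpNorm (f - c ∘ π) p μ + eLpNorm ((π ⁻¹' (↑S)ᶜ).indicator (c ∘ π)) p μ := by
  have hcS (b : β) : ‖(S : Set β).indicator c b‖ ≤ B :=
    (norm_indicator_le_norm_self c b).trans (hc b)
  have hmem : MemLp ((S : Set β).indicator c ∘ π) p μ :=
    .of_bound (StronglyMeasurable.of_discrete.comp_measurable hπ).aestronglyMeasurable B
      (ae_of_all _ fun x => hcS (π x))
  refine ⟨hmem.toLp, ⟨_, hcS, fun b hb => indicator_of_notMem hb c, hmem.coeFn_toLp⟩, ?_⟩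
  have hsplit : ⇑g - ⇑hmem.toLp =ᵐ[μ] (f - c ∘ π) + (π ⁻¹' (↑S)ᶜ).indicator (c ∘ π) := by
    filter_upwards [hgf, hmem.coeFn_toLp] with x hgx hx
    by_cases hxS : π x ∈ S <;> simp [hgx, hx, indicator, hxS]
  rw [Lp.edist_def, eLpNorm_congr_ae hsplit]
  have hc_meas : AEStronglyMeasurable (c ∘ π) μ :=
    (StronglyMeasurable.of_discrete.comp_measurable hπ).aestronglyMeasurable
  exact eLpNorm_add_le (((Lp.aestronglyMeasurable g).congr hgf).sub hc_meas)
    (hc_meas.indicator (hπ S.measurableSet.compl)) Fact.out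

theorem tendsto_measure_preimage_compl_atTop (hπ : Measurable π) :
    Tendsto (fun S : Finset β => μ (π ⁻¹' (↑S)ᶜ)) atTop (𝓝 0) := by
  have hempty : ⋂ S : Finset β, π ⁻¹' (↑S)ᶜ = ∅ :=
    eq_empty_of_forall_notMem fun x hx => mem_iInter.1 hx {π x} (Finset.mem_coe.2 (by simp))
  have h := tendsto_measure_iInter_atTop (μ := μ) (s := fun S : Finset β => π ⁻¹' (↑S)ᶜ)
    (fun S => (hπ S.measurableSet.compl).nullMeasurableSet)
    (fun S S' hSS' => preimage_mono (compl_subset_compl.2 (Finset.coe_subset.2 hSS')))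
    ⟨∅, measure_ne_top μ _⟩
  rwa [hempty, measure_empty] at h

theorem exists_finset_eLpNorm_indicator_le (hp₀ : p ≠ 0) (hp_top : p ≠ ∞) (hπ : Measurable π)
    (B : ℝ) {ε : ℝ≥0∞} (hε : 0 < ε) :
    ∃ S : Finset β, ∀ g : α → E, (∀ x, ‖g x‖ ≤ B) →
      eLpNorm ((π ⁻¹' (↑S)ᶜ).indicator g) p μ ≤ ε := by
  have ht : 0 < p.toReal⁻¹ := inv_pos.2 (ENNReal.toReal_pos hp₀ hp_top)
  have hlim : Tendsto (fun S : Finset β => μ (π ⁻¹' (↑S)ᶜ) ^ p.toReal⁻¹ * ENNReal.ofReal B)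
      atTop (𝓝 0) := by
    have := ENNReal.Tendsto.mul_const (b := ENNReal.ofReal B)
      (((ENNReal.continuous_rpow_const (y := p.toReal⁻¹)).tendsto 0).comp
        (tendsto_measure_preimage_compl_atTop (μ := μ) hπ)) (.inr ENNReal.ofReal_ne_top)
    rwa [ENNReal.zero_rpow_of_pos ht, zero_mul] at this
  obtain ⟨S, hS⟩ := (hlim.eventually (ge_mem_nhds hε)).exists
  refine ⟨S, fun g hg => ?_⟩
  have hs : MeasurableSet (π ⁻¹' (↑S)ᶜ) := hπ S.measurableSet.compl
  rw [eLpNorm_indicator_eq_eLpNorm_restrict hs]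
  refine (eLpNorm_le_of_ae_bound (ae_of_all _ hg)).trans ?_
  rwa [Measure.restrict_apply_univ]

end StepFunctions

theorem kolmogorov_riesz_frechet_general
    (q : ℕ) (p : ℝ≥0∞) [Fact (1 ≤ p)] (hptop : p ≠ ∞)
    (F : Set ((Fin q → ℝ) → ℂ))
    (hmem : ∀ f ∈ F, MemLp f p volume)
    (hbdd : ∃ M : ℝ, ∀ f ∈ F, eLpNorm f p volume ≤ ENNReal.ofReal M)
    (hunif : ∀ ε > 0, ∃ δ > 0, ∀ h : Fin q → ℝ, ‖h‖ < δ → ∀ f ∈ F,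
      eLpNorm (fun x => f (x + h) - f x) p volume ≤ ENNReal.ofReal ε)
    (Ω : Set (Fin q → ℝ)) (hΩfin : volume Ω < ∞) :
    IsCompact (closure {g : Lp ℂ p (volume.restrict Ω) |
      ∃ f ∈ F, (g : (Fin q → ℝ) → ℂ) =ᵐ[volume.restrict Ω] f}) := by
  have hp : 1 ≤ p := Fact.out
  obtain ⟨M, hM⟩ := hbdd
  have : IsFiniteMeasure (volume.restrict Ω) := isFiniteMeasure_restrict.2 hΩfin.ne
  refine (totallyBounded_of_forall_exists_dist_lt fun ε hε => ?_).closure.isCompact_of_isClosed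
    isClosed_closure
  obtain ⟨r, hr, hF⟩ := hunif (ε / (4 * 2 ^ q)) (by positivity)
  obtain ⟨B, hB⟩ := exists_norm_setAverage_gridCube_le hp hr (fun f hf => (hmem f hf).1)
    ENNReal.ofReal_ne_top hM
  obtain ⟨S, hS⟩ := exists_finset_eLpNorm_indicator_le (μ := volume.restrict Ω) (E := ℂ)
    (zero_lt_one.trans_le hp).ne' hptop (measurable_gridIndex r) B (ε := ENNReal.ofReal (ε / 4))
    (by simpa using hε)
  refine ⟨_, totallyBounded_boundedStepFunctions (measurable_gridIndex r) S B, ?_⟩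
  rintro g ⟨f, hf, hgf⟩
  obtain ⟨u, hu, hgu⟩ := exists_mem_boundedStepFunctions_edist_le (measurable_gridIndex r) hgf
    (hB f hf) S
  refine ⟨u, hu, edist_lt_ofReal.1 (hgu.trans_lt ?_)⟩
  have happrox : eLpNorm (gridAverage r f - f) p volume ≤ ENNReal.ofReal (ε / 4) := by
    refine (eLpNorm_gridAverage_sub_le hp hptop hr (hmem f hf) fun h hh => hF h hh f hf).trans_eq ?_
    rw [Fintype.card_fin, ← ENNReal.ofReal_ofNat 2, ← ENNReal.ofReal_pow zero_le_two,
      ← ENNReal.ofReal_mul (by positivity)]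
    congr 1
    field_simp
  -- `gridAverage r f` is by definition `(fun k => ⨍ y in gridCube r k, f y) ∘ gridIndex r`.
  calc eLpNorm (f - gridAverage r f) p (volume.restrict Ω) +
        eLpNorm ((gridIndex r ⁻¹' (↑S)ᶜ).indicator (gridAverage r f)) p (volume.restrict Ω)
      ≤ ENNReal.ofReal (ε / 4) + ENNReal.ofReal (ε / 4) := by
        gcongr
        · rw [eLpNorm_sub_comm]
          exact (eLpNorm_mono_measure _ Measure.restrict_le_self).trans happrox
        · exact hS _ fun x => hB f hf _
    _ < ENNReal.ofReal ε := by
        rw [← ENNReal.ofReal_add (by positivity) (by positivity)]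
        exact (ENNReal.ofReal_lt_ofReal_iff hε).2 (by linarith)

/-- **Kolmogorov–Riesz–Fréchet theorem**: let `1 ≤ p < ∞` and let `F` be a bounded family in
`L^p(ℝ^q, ℂ)`.  If `‖τ_h f - f‖_p → 0` as `‖h‖ → 0` uniformly in `f ∈ F`, where
`τ_h f := f(· + h)`, then for every measurable set `Ω ⊆ ℝ^q` of finite measure the set of
restrictions `{ f|_Ω : f ∈ F }` has compact closure in `L^p(Ω, ℂ)`. -/
theorem kolmogorov_riesz_frechet
    (q : ℕ) (p : ℝ≥0∞) [Fact (1 ≤ p)] (hptop : p ≠ ∞)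
    (F : Set ((Fin q → ℝ) → ℂ))
    (hmem : ∀ f ∈ F, MemLp f p volume)
    (hbdd : ∃ M : ℝ, ∀ f ∈ F, eLpNorm f p volume ≤ ENNReal.ofReal M)
    (hunif : ∀ ε > 0, ∃ δ > 0, ∀ h : Fin q → ℝ, ‖h‖ < δ → ∀ f ∈ F,
      eLpNorm (fun x => f (x + h) - f x) p volume ≤ ENNReal.ofReal ε)
    (Ω : Set (Fin q → ℝ)) (hΩm : MeasurableSet Ω) (hΩfin : volume Ω < ∞) :
    IsCompact (closure {g : Lp ℂ p (volume.restrict Ω) |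
      ∃ f ∈ F, (g : (Fin q → ℝ) → ℂ) =ᵐ[volume.restrict Ω] f}) :=
  kolmogorov_riesz_frechet_general q p hptop F hmem hbdd hunif Ω hΩfin
end
end

section
/- For every x ∈ L¹([a,b],ℂ) and every n ≥ 1, ‖π_n(x) − x‖₁ ≤ 2 w₁(x, h_n); consequently π_n(x) → x in L¹([a,b],ℂ) as n → ∞ for every x ∈ L¹([a,b],ℂ). -/
open MeasureTheory Set Filter
noncomputable section

/-- `w₁(x,h)`: the oscillation of `x ∈ L¹([a,b],ℂ)` relative to the parameter `h`, where
`x̃` denotes the extension of `x` by zero outside `[a,b]`. -/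
def w1 (a b : ℝ) (x : ℝ → ℂ) (h : ℝ) : ℝ :=
  sSup ((fun u => ∫ v in Icc a b,
    ‖Set.indicator (Icc a b) x (v + u) - Set.indicator (Icc a b) x v‖) '' Icc (-|h|) |h|)

/-- the grid node `t_{n,i} := a + i·h_n` with `h_n := (b-a)/n`. -/
def tnode (a b : ℝ) (n : ℕ) (i : ℕ) : ℝ := a + i * ((b - a) / n)

/-- the cell mean `c_{n,i}(x) := (1/h_n) ∫_{t_{n,i-1}}^{t_{n,i}} x(v) dv`. -/
def cmean (a b : ℝ) (n : ℕ) (x : ℝ → ℂ) (i : ℕ) : ℂ :=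
  (((b - a) / n : ℝ) : ℂ)⁻¹ * ∫ v in (tnode a b n (i - 1))..(tnode a b n i), x v

/-- a representative of the step function `π_n(x)`. -/
def pirep (a b : ℝ) (n : ℕ) (x : ℝ → ℂ) : ℝ → ℂ := fun t =>
  ∑ i ∈ Finset.Icc 1 n, Set.indicator (Ico (tnode a b n (i - 1)) (tnode a b n i))
    (fun _ => cmean a b n x i) t

/-!
If `t` lies in the cell `[c, c + h)`, then `π_n x (t) - x(t)` is the mean of `x(v) - x(t)` over
that cell, and the cell lies in `[t - h, t + h]`; hence
`|π_n x (t) - x(t)| ≤ h⁻¹ ∫_{-h}^{h} |x̃(t + u) - x̃(t)| du`. Integrating over `t ∈ [a, b]` and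
exchanging the integrals (Tonelli) bounds `‖π_n x - x‖₁` by `h⁻¹ · 2h · w₁(x, h)`. Convergence
follows because `w₁(x, h) → 0` as `h → 0`, by continuity of translation in `L¹(ℝ)`.
-/

open scoped ENNReal Topology

section Translation

variable {E : Type*} [NormedAddCommGroup E]

lemma setLIntegral_le_setLIntegral_comp_const_add {g : ℝ → ℝ≥0∞} {s : Set ℝ} {t h : ℝ}
    (hs : s ⊆ Icc (t - h) (t + h)) :
    ∫⁻ v in s, g v ≤ ∫⁻ u in Icc (-h) h, g (t + u) := by
  rw [(measurePreserving_add_left volume t).setLIntegral_comp_emb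
    (measurableEmbedding_addLeft t), image_const_add_Icc, ← sub_eq_add_neg]
  exact lintegral_mono_set hs

lemma integral_norm_comp_add_sub_le {f : ℝ → E} (hf : Integrable f) (s : Set ℝ) (u : ℝ) :
    ∫ v in s, ‖f (v + u) - f v‖ ≤ 2 * ∫ v, ‖f v‖ := by
  have hfu : Integrable (fun v => f (v + u)) := hf.comp_add_right u
  calc ∫ v in s, ‖f (v + u) - f v‖
      ≤ ∫ v, ‖f (v + u) - f v‖ :=
        setIntegral_le_integral (hfu.sub hf).norm (.of_forall fun _ => norm_nonneg _)
    _ ≤ ∫ v, (‖f (v + u)‖ + ‖f v‖) :=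
        integral_mono (hfu.sub hf).norm (hfu.norm.add hf.norm) fun _ => norm_sub_le _ _
    _ = 2 * ∫ v, ‖f v‖ := by
        rw [integral_add hfu.norm hf.norm, integral_add_right_eq_self (fun v => ‖f v‖)]
        ring

lemma tendsto_integral_norm_comp_add_sub {f : ℝ → E} (hf : Integrable f) :
    Tendsto (fun u => ∫ v, ‖f (v + u) - f v‖) (𝓝 0) (𝓝 0) := by
  have : Fact ((1 : ℝ≥0∞) ≤ 1) := ⟨le_rfl⟩
  let shift : ℝ → C(ℝ, ℝ) := fun u => ⟨(· + u), continuous_add_const u⟩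
  have hshift (u : ℝ) : MeasurePreserving (shift u) volume volume :=
    measurePreserving_add_right volume u
  let F : ℝ → Lp E 1 (volume : Measure ℝ) :=
    fun u => Lp.compMeasurePreserving (shift u) (hshift u) (hf.toL1 f)
  have hF : Tendsto F (𝓝 0) (𝓝 (F 0)) :=
    tendsto_const_nhds.compMeasurePreservingLp
      (ContinuousMap.curry ⟨fun p : ℝ × ℝ => p.2 + p.1, by fun_prop⟩).continuous.continuousAt
      hshift (hshift 0) ENNReal.one_ne_top
  have hF_ae (u : ℝ) : F u =ᵐ[volume] fun v => f (v + u) :=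
    (Lp.coeFn_compMeasurePreserving _ (hshift u)).trans
      ((hshift u).quasiMeasurePreserving.ae_eq_comp hf.coeFn_toL1)
  have hnorm (u : ℝ) : ∫ v, ‖f (v + u) - f v‖ = ‖F u - F 0‖ := by
    rw [L1.norm_eq_integral_norm]
    refine integral_congr_ae (Filter.EventuallyEq.fun_comp ?_ norm)
    filter_upwards [Lp.coeFn_sub (F u) (F 0), hF_ae u, hF_ae 0] with v hsub hu h0
    rw [hsub, Pi.sub_apply, hu, h0, add_zero]
  simp_rw [hnorm]
  simpa using (hF.sub_const (F 0)).norm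

lemma aemeasurable_uncurry_enorm_comp_add_sub {f : ℝ → E}
    (hf : AEStronglyMeasurable f volume) (s t : Set ℝ) :
    AEMeasurable (Function.uncurry fun v u => ‖f (v + u) - f v‖ₑ)
      ((volume.restrict s).prod (volume.restrict t)) := by
  rw [Measure.prod_restrict]
  exact (((hf.comp_quasiMeasurePreserving (quasiMeasurePreserving_add volume volume)).sub
    (hf.comp_quasiMeasurePreserving Measure.quasiMeasurePreserving_fst)).enorm).restrict

end Translation

lemma enorm_inv_smul_intervalIntegral_sub_le {E : Type*} [NormedAddCommGroup E]
    [NormedSpace ℝ E] [CompleteSpace E] {f : ℝ → E} {c h : ℝ} (hh : 0 < h)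
    (hf : IntervalIntegrable f volume c (c + h)) (y : E) :
    ‖h⁻¹ • (∫ v in c..c + h, f v) - y‖ₑ ≤
      (ENNReal.ofReal h)⁻¹ * ∫⁻ v in Ioc c (c + h), ‖f v - y‖ₑ := by
  have hmean : h⁻¹ • (∫ v in c..c + h, f v) - y = h⁻¹ • ∫ v in c..c + h, (f v - y) := by
    rw [intervalIntegral.integral_sub hf intervalIntegrable_const,
      intervalIntegral.integral_const, add_sub_cancel_left, smul_sub, inv_smul_smul₀ hh.ne']
  rw [hmean, enorm_smul, Real.enorm_eq_ofReal (inv_nonneg.2 hh.le),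
    ENNReal.ofReal_inv_of_pos hh, intervalIntegral.integral_of_le (by linarith)]
  gcongr
  exact enorm_integral_le_lintegral_enorm _

lemma lintegral_lintegral_le_of_forall_lintegral_le {α β : Type*} [MeasurableSpace α]
    [MeasurableSpace β] {μ : Measure α} {ν : Measure β} [SFinite μ] [SFinite ν]
    {F : α → β → ℝ≥0∞} (hF : AEMeasurable (Function.uncurry F) (μ.prod ν)) {M : ℝ≥0∞}
    (hM : ∀ᵐ y ∂ν, ∫⁻ x, F x y ∂μ ≤ M) :
    ∫⁻ x, ∫⁻ y, F x y ∂ν ∂μ ≤ ν univ * M := by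
  rw [lintegral_lintegral_swap hF, mul_comm, ← lintegral_const]
  exact lintegral_mono_ae hM

section Grid

variable {a b : ℝ} {n : ℕ}

lemma mesh_pos (hab : a < b) (hn : 1 ≤ n) : 0 < (b - a) / n :=
  div_pos (sub_pos.2 hab) (by exact_mod_cast hn)

@[simp]
lemma tnode_zero : tnode a b n 0 = a := by simp [tnode]

lemma tnode_self (hn : n ≠ 0) : tnode a b n n = b := by
  rw [tnode, mul_div_cancel₀ _ (Nat.cast_ne_zero.2 hn), add_sub_cancel]

lemma tnode_succ (k : ℕ) : tnode a b n (k + 1) = tnode a b n k + (b - a) / n := by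
  simp only [tnode, Nat.cast_succ]
  ring

lemma monotone_tnode (hab : a ≤ b) : Monotone (tnode a b n) := fun i j hij => by
  unfold tnode
  gcongr

lemma exists_mem_Ico_tnode {t : ℝ} (hn : n ≠ 0) (ht : t ∈ Ico a b) :
    ∃ k < n, t ∈ Ico (tnode a b n k) (tnode a b n (k + 1)) := by
  have ht' : t ∈ Ico (tnode a b n 0) (tnode a b n n) := by rwa [tnode_zero, tnode_self hn]
  obtain ⟨k, hk, htk⟩ := mem_iUnion₂.1 (Ico_subset_biUnion_Ico n (tnode a b n) ht')
  exact ⟨k, Finset.mem_range.1 hk, htk⟩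

lemma cmean_succ (x : ℝ → ℂ) (k : ℕ) :
    cmean a b n x (k + 1) =
      ((b - a) / n)⁻¹ • ∫ v in tnode a b n k..tnode a b n k + (b - a) / n, x v := by
  rw [cmean, Nat.add_sub_cancel, tnode_succ, Complex.real_smul, Complex.ofReal_inv]

lemma pirep_eq_cmean (hab : a ≤ b) (x : ℝ → ℂ) {k : ℕ} (hk : k < n) {t : ℝ}
    (ht : t ∈ Ico (tnode a b n k) (tnode a b n (k + 1))) :
    pirep a b n x t = cmean a b n x (k + 1) := by
  rw [pirep, Finset.sum_eq_single_of_mem (k + 1) (Finset.mem_Icc.2 ⟨by omega, hk⟩)]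
  · exact indicator_of_mem ht _
  · intro i hi hik
    obtain ⟨j, rfl⟩ : ∃ j, i = j + 1 := ⟨i - 1, by grind⟩
    refine indicator_of_notMem (fun htj => ?_) _
    exact ((monotone_tnode hab).pairwise_disjoint_on_Ico_succ (by omega : j ≠ k)).ne_of_mem
      (by simpa using htj) ht rfl

end Grid

section Oscillation

variable {a b : ℝ} {x : ℝ → ℂ}

lemma bddAbove_image_integral_norm_indicator_shift (hx : IntegrableOn x (Icc a b)) (h : ℝ) :
    BddAbove ((fun u => ∫ v in Icc a b,
      ‖(Icc a b).indicator x (v + u) - (Icc a b).indicator x v‖) '' Icc (-|h|) |h|) :=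
  ⟨2 * ∫ v, ‖(Icc a b).indicator x v‖, by
    rintro - ⟨u, -, rfl⟩
    exact integral_norm_comp_add_sub_le (hx.integrable_indicator measurableSet_Icc) _ u⟩

lemma integral_norm_indicator_shift_le_w1 (hx : IntegrableOn x (Icc a b)) {h u : ℝ}
    (hu : |u| ≤ |h|) :
    ∫ v in Icc a b, ‖(Icc a b).indicator x (v + u) - (Icc a b).indicator x v‖ ≤ w1 a b x h :=
  le_csSup (bddAbove_image_integral_norm_indicator_shift hx h) ⟨u, abs_le.1 hu, rfl⟩

lemma setLIntegral_enorm_indicator_shift_le_w1 (hx : IntegrableOn x (Icc a b)) {h u : ℝ}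
    (hu : |u| ≤ |h|) :
    ∫⁻ v in Icc a b, ‖(Icc a b).indicator x (v + u) - (Icc a b).indicator x v‖ₑ ≤
      ENNReal.ofReal (w1 a b x h) := by
  have hxt := hx.integrable_indicator measurableSet_Icc
  rw [← ofReal_integral_norm_eq_lintegral_enorm
    (f := fun v => (Icc a b).indicator x (v + u) - (Icc a b).indicator x v)
    ((hxt.comp_add_right u).sub hxt).integrableOn]
  exact ENNReal.ofReal_le_ofReal (integral_norm_indicator_shift_le_w1 hx hu)

lemma w1_nonneg (hx : IntegrableOn x (Icc a b)) (h : ℝ) : 0 ≤ w1 a b x h := by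
  simpa using integral_norm_indicator_shift_le_w1 hx (u := 0) (h := h) (by simp)

lemma w1_le {h ε : ℝ} (hε : ∀ u, |u| ≤ |h| →
    ∫ v in Icc a b, ‖(Icc a b).indicator x (v + u) - (Icc a b).indicator x v‖ ≤ ε) :
    w1 a b x h ≤ ε := by
  refine csSup_le ((nonempty_Icc.2 (neg_le_self (abs_nonneg h))).image _) ?_
  rintro - ⟨u, hu, rfl⟩
  exact hε u (abs_le.2 hu)

lemma tendsto_w1_nhds_zero (hx : IntegrableOn x (Icc a b)) :
    Tendsto (w1 a b x) (𝓝 0) (𝓝 0) := by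
  have hxt := hx.integrable_indicator measurableSet_Icc
  rw [Metric.tendsto_nhds_nhds]
  intro ε hε
  obtain ⟨δ, hδ, hshift⟩ :=
    Metric.tendsto_nhds_nhds.1 (tendsto_integral_norm_comp_add_sub hxt) (ε / 2) (half_pos hε)
  refine ⟨δ, hδ, fun h hh => ?_⟩
  have hle : w1 a b x h ≤ ε / 2 := by
    refine w1_le fun u hu => ?_
    have hu' : dist u 0 < δ := by
      rw [Real.dist_eq, sub_zero]
      exact hu.trans_lt (by simpa [Real.dist_eq] using hh)
    have hsmall := hshift hu'
    rw [Real.dist_eq, sub_zero] at hsmall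
    exact (setIntegral_le_integral ((hxt.comp_add_right u).sub hxt).norm
      (.of_forall fun _ => norm_nonneg _)).trans ((le_abs_self _).trans hsmall.le)
  rw [Real.dist_eq, sub_zero, abs_of_nonneg (w1_nonneg hx h)]
  linarith

end Oscillation

section Approximation

variable {a b : ℝ} {n : ℕ} {x : ℝ → ℂ}

lemma enorm_pirep_sub_le (hab : a < b) (hn : 1 ≤ n) (hx : IntegrableOn x (Icc a b)) {t : ℝ}
    (ht : t ∈ Ico a b) :
    ‖pirep a b n x t - x t‖ₑ ≤ (ENNReal.ofReal ((b - a) / n))⁻¹ *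
      ∫⁻ u in Icc (-((b - a) / n)) ((b - a) / n),
        ‖(Icc a b).indicator x (t + u) - (Icc a b).indicator x t‖ₑ := by
  set h := (b - a) / n
  have h0 : 0 < h := mesh_pos hab hn
  obtain ⟨k, hk, htk⟩ := exists_mem_Ico_tnode (n := n) (by omega) ht
  set c := tnode a b n k
  have hcell : tnode a b n (k + 1) = c + h := tnode_succ k
  have hsub : Icc c (c + h) ⊆ Icc a b := by
    rw [← hcell]
    refine Icc_subset_Icc ?_ ?_
    · simpa using monotone_tnode (n := n) hab.le (Nat.zero_le k)
    · simpa [tnode_self (a := a) (b := b) (by omega : n ≠ 0)] using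
        monotone_tnode (n := n) hab.le (show k + 1 ≤ n by omega)
  rw [pirep_eq_cmean hab.le x hk htk, cmean_succ]
  rw [hcell] at htk
  calc _ ≤ (ENNReal.ofReal h)⁻¹ * ∫⁻ v in Ioc c (c + h), ‖x v - x t‖ₑ :=
        enorm_inv_smul_intervalIntegral_sub_le h0
          ((intervalIntegrable_iff_integrableOn_Icc_of_le (by linarith)).2 (hx.mono_set hsub)) _
    _ = (ENNReal.ofReal h)⁻¹ * ∫⁻ v in Ioc c (c + h),
          ‖(Icc a b).indicator x v - (Icc a b).indicator x t‖ₑ := by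
        congr 1
        refine setLIntegral_congr_fun measurableSet_Ioc fun v hv => ?_
        rw [indicator_of_mem (hsub (Ioc_subset_Icc_self hv)),
          indicator_of_mem (Ico_subset_Icc_self ht)]
    _ ≤ _ := mul_le_mul_right (setLIntegral_le_setLIntegral_comp_const_add fun v hv =>
          ⟨by linarith [hv.1, htk.2], by linarith [hv.2, htk.1]⟩) _

lemma integral_norm_pirep_sub_le (hab : a < b) (hn : 1 ≤ n) (hx : IntegrableOn x (Icc a b)) :
    ∫ v in Icc a b, ‖pirep a b n x v - x v‖ ≤ 2 * w1 a b x ((b - a) / n) := by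
  set h := (b - a) / n
  have h0 : 0 < h := mesh_pos hab hn
  have hshift : ∀ᵐ u ∂(volume.restrict (Icc (-h) h)),
      ∫⁻ t in Icc a b, ‖(Icc a b).indicator x (t + u) - (Icc a b).indicator x t‖ₑ ≤
        ENNReal.ofReal (w1 a b x h) :=
    ae_restrict_of_forall_mem measurableSet_Icc fun u hu =>
      setLIntegral_enorm_indicator_shift_le_w1 hx (by rwa [abs_of_pos h0, abs_le])
  have hlin : ∫⁻ v in Icc a b, ‖pirep a b n x v - x v‖ₑ ≤ ENNReal.ofReal (2 * w1 a b x h) :=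
    calc ∫⁻ v in Icc a b, ‖pirep a b n x v - x v‖ₑ
        = ∫⁻ v in Ico a b, ‖pirep a b n x v - x v‖ₑ := (setLIntegral_congr Ico_ae_eq_Icc).symm
      _ ≤ ∫⁻ t in Ico a b, (ENNReal.ofReal h)⁻¹ * ∫⁻ u in Icc (-h) h,
            ‖(Icc a b).indicator x (t + u) - (Icc a b).indicator x t‖ₑ :=
          setLIntegral_mono' measurableSet_Ico fun t ht => enorm_pirep_sub_le hab hn hx ht
      _ = (ENNReal.ofReal h)⁻¹ * ∫⁻ t in Icc a b, ∫⁻ u in Icc (-h) h,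
            ‖(Icc a b).indicator x (t + u) - (Icc a b).indicator x t‖ₑ := by
          rw [setLIntegral_congr Ico_ae_eq_Icc, lintegral_const_mul' _ _ (by simp [h0])]
      _ ≤ (ENNReal.ofReal h)⁻¹ * (volume (Icc (-h) h) * ENNReal.ofReal (w1 a b x h)) := by
          gcongr
          simpa using lintegral_lintegral_le_of_forall_lintegral_le
            (aemeasurable_uncurry_enorm_comp_add_sub
              (hx.integrable_indicator measurableSet_Icc).aestronglyMeasurable _ _) hshift
      _ = ENNReal.ofReal (2 * w1 a b x h) := by
          rw [Real.volume_Icc, ← ENNReal.ofReal_mul (by linarith),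
            ← ENNReal.ofReal_inv_of_pos h0, ← ENNReal.ofReal_mul (by positivity)]
          congr 1
          field_simp
          ring
  have hpirep : Measurable (pirep a b n x) :=
    Finset.measurable_sum _ fun i _ => measurable_const.indicator measurableSet_Ico
  rw [integral_norm_eq_lintegral_enorm (f := fun v => pirep a b n x v - x v)
    (hpirep.aestronglyMeasurable.sub hx.aestronglyMeasurable)]
  exact ENNReal.toReal_le_of_le_ofReal (by have := w1_nonneg hx h; positivity) hlin

end Approximation

/-- For every `x ∈ L¹([a,b],ℂ)` and every `n ≥ 1`, `‖π_n(x) - x‖₁ ≤ 2 w₁(x, h_n)`;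
consequently `π_n(x) → x` in `L¹([a,b],ℂ)` as `n → ∞`. -/
theorem pin_approximation (a b : ℝ) (hab : a < b) :
    (∀ x : ℝ → ℂ, IntegrableOn x (Icc a b) → ∀ n : ℕ, 1 ≤ n →
      (∫ v in Icc a b, ‖pirep a b n x v - x v‖) ≤ 2 * w1 a b x ((b - a) / n)) ∧
    (∀ x : ℝ → ℂ, IntegrableOn x (Icc a b) →
      Tendsto (fun n : ℕ => ∫ v in Icc a b, ‖pirep a b n x v - x v‖) atTop (nhds 0)) := by
  refine ⟨fun x hx n hn => integral_norm_pirep_sub_le hab hn hx, fun x hx => ?_⟩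
  have hw1 : Tendsto (fun n : ℕ => 2 * w1 a b x ((b - a) / n)) atTop (𝓝 0) := by
    simpa using ((tendsto_w1_nhds_zero hx).comp
      (tendsto_const_div_atTop_nhds_zero_nat (b - a))).const_mul 2
  refine squeeze_zero' (.of_forall fun n => integral_nonneg fun v => norm_nonneg _) ?_ hw1
  exact eventually_atTop.2 ⟨1, fun n hn => integral_norm_pirep_sub_le hab hn hx⟩
end
end
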